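/- arXiv:1310.7214 — 2 statements merged into one kernel-verified Lean document; each statement's English description precedes it below -/
import Mathlib

section
/- Let γ ∈ SL₂(ℂ)\SU₂(ℂ) with Ψ(γ) = [[A,C′],[C,A′]]. Then the center P_{Ψ(γ)} = −C⁻¹A′ and the point Ψ(γ⁻¹)(0) = −C̄·(A*)⁻¹ are inverse points with respect to S²: they lie on the same ray from the origin and the product of their Euclidean norms equals 1. Explicitly, P_{Ψ(γ)}·(Ψ(γ⁻¹)(0))⁻¹ = |A|²|C|⁻² ∈ ℝ. -/
/-!
For `γ = [[a, b], [c, d]]`, writing quaternions as `z + w j` with `z w : ℂ`, the entries of `Ψ(γ)`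
are `A = (a + d̄ + (b - c̄) j) / 2`, `C = (c + b̄ + (d - ā) j) / 2`, `A′ = (d + ā + (c - b̄) j) / 2`,
and a direct computation gives `A′ A* = |A|²`. Hence `P Q⁻¹ = C⁻¹ (A′ A*) C̄⁻¹ = |A|² / |C|²` is
real. As `|A′| = |A|`, this number is also `|P|²`, so `Q = P / |P|²`. Finally `det γ = 1` gives
`|A|² = |C|² + 1` and `|C|² = (‖γ‖² - 2) / 4`, which is nonzero exactly when `γ ∉ SU₂(ℂ)`.
-/

open scoped Quaternion
open Matrix

/-- Embedding of `ℂ` into the real quaternions `ℍ`. -/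
noncomputable def toQ (z : ℂ) : ℍ[ℝ] := ⟨z.re, z.im, 0, 0⟩

/-- The quaternion `j`. -/
noncomputable def jq : ℍ[ℝ] := ⟨0, 0, 1, 0⟩

/-- The map `Ψ(γ) = ḡ γ g` where `g = (1/√2)[[1,j],[j,1]]`. -/
noncomputable def Ψ (γ : Matrix (Fin 2) (Fin 2) ℂ) : Matrix (Fin 2) (Fin 2) ℍ[ℝ] :=
  ((Real.sqrt 2)⁻¹ • !![(1 : ℍ[ℝ]), -jq; -jq, 1]) * (γ.map toQ) *
    ((Real.sqrt 2)⁻¹ • !![(1 : ℍ[ℝ]), jq; jq, 1])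

/-- `‖γ‖²`, the sum of the squared moduli of the entries of `γ`. -/
noncomputable def mnorm (γ : Matrix (Fin 2) (Fin 2) ℂ) : ℝ :=
  Complex.normSq (γ 0 0) + Complex.normSq (γ 0 1) + Complex.normSq (γ 1 0) + Complex.normSq (γ 1 1)

/-- For `u = u₀+u₁i+u₂j+u₃k`, `u* = u₀+u₁i+u₂j−u₃k`. -/
noncomputable def starred (u : ℍ[ℝ]) : ℍ[ℝ] := ⟨u.re, u.imI, u.imJ, -u.imK⟩

namespace Quaternion

theorem neg_inv_mul_mul_inv_eq_of_mul_eq_coe (C A S : ℍ[ℝ]) {r : ℝ} (h : A * S = r) :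
    (-C⁻¹ * A) * (-star C * S⁻¹)⁻¹ = (r * (normSq C)⁻¹ : ℝ) := by
  calc (-C⁻¹ * A) * (-star C * S⁻¹)⁻¹ = C⁻¹ * (A * S) * (star C)⁻¹ := by
        rw [_root_.mul_inv_rev, inv_inv, inv_neg]
        simp only [neg_mul, mul_neg, neg_neg, mul_assoc]
    _ = r * (star C * C)⁻¹ := by rw [h, ← coe_commutes, mul_assoc, _root_.mul_inv_rev]
    _ = (r * (normSq C)⁻¹ : ℝ) := by rw [star_mul_self, coe_mul, coe_inv]

theorem eq_inv_normSq_smul_of_mul_inv_eq {P Q : ℍ[ℝ]} (hP : P ≠ 0)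
    (h : P * Q⁻¹ = ((normSq P : ℝ) : ℍ[ℝ])) : Q = (normSq P)⁻¹ • P := by
  have hQ : Q⁻¹ = P⁻¹ * ((normSq P : ℝ) : ℍ[ℝ]) := by rw [← h, inv_mul_cancel_left₀ hP]
  rw [← inv_inv Q, hQ, _root_.mul_inv_rev, inv_inv, ← coe_inv, coe_mul_eq_smul]

theorem norm_mul_norm_inv_normSq_smul {P : ℍ[ℝ]} (hP : P ≠ 0) :
    ‖P‖ * ‖(normSq P)⁻¹ • P‖ = 1 := by
  have : ‖P‖ ≠ 0 := norm_ne_zero_iff.mpr hP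
  rw [norm_smul, normSq_eq_norm_mul_self, norm_inv, norm_mul, Real.norm_eq_abs, abs_norm]
  field_simp

theorem normSq_mk (a b c d : ℝ) : normSq (⟨a, b, c, d⟩ : ℍ[ℝ]) = a ^ 2 + b ^ 2 + c ^ 2 + d ^ 2 :=
  normSq_def' _

end Quaternion

open Quaternion

section

variable (γ : Matrix (Fin 2) (Fin 2) ℂ)

theorem Ψ_eq_smul : Ψ γ = (2⁻¹ : ℝ) • (!![1, -jq; -jq, 1] * γ.map toQ * !![1, jq; jq, 1]) := by
  have : (√2)⁻¹ * (√2)⁻¹ = (2⁻¹ : ℝ) := by rw [← mul_inv, Real.mul_self_sqrt zero_le_two]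
  rw [Ψ, Matrix.smul_mul, Matrix.mul_smul, Matrix.smul_mul, smul_smul, this]

theorem Ψ_zero_zero : Ψ γ 0 0 = ⟨((γ 0 0).re + (γ 1 1).re) / 2, ((γ 0 0).im - (γ 1 1).im) / 2,
    ((γ 0 1).re - (γ 1 0).re) / 2, ((γ 0 1).im + (γ 1 0).im) / 2⟩ := by
  rw [Ψ_eq_smul, eta_fin_two (γ.map toQ), mul_fin_two, mul_fin_two]
  ext <;> simp only [map_apply, Matrix.smul_apply, of_apply, cons_val', cons_val_zero,
    cons_val_fin_one, re_smul, imI_smul, imJ_smul, imK_smul, re_add, imI_add, imJ_add, imK_add,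
    one_mul, mul_one, re_neg, imI_neg, imJ_neg, imK_neg, re_mul, imI_mul, imJ_mul, imK_mul,
    smul_eq_mul] <;>
    simp only [toQ, jq] <;> ring

theorem Ψ_one_zero : Ψ γ 1 0 = ⟨((γ 1 0).re + (γ 0 1).re) / 2, ((γ 1 0).im - (γ 0 1).im) / 2,
    ((γ 1 1).re - (γ 0 0).re) / 2, ((γ 1 1).im + (γ 0 0).im) / 2⟩ := by
  rw [Ψ_eq_smul, eta_fin_two (γ.map toQ), mul_fin_two, mul_fin_two]
  ext <;> simp only [map_apply, Matrix.smul_apply, of_apply, cons_val', cons_val_zero, cons_val_one,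
    cons_val_fin_one, re_smul, imI_smul, imJ_smul, imK_smul, re_add, imI_add, imJ_add, imK_add,
    one_mul, mul_one, re_neg, imI_neg, imJ_neg, imK_neg, re_mul, imI_mul, imJ_mul, imK_mul,
    smul_eq_mul] <;>
    simp only [toQ, jq] <;> ring

theorem Ψ_one_one : Ψ γ 1 1 = ⟨((γ 1 1).re + (γ 0 0).re) / 2, ((γ 1 1).im - (γ 0 0).im) / 2,
    ((γ 1 0).re - (γ 0 1).re) / 2, ((γ 1 0).im + (γ 0 1).im) / 2⟩ := by
  rw [Ψ_eq_smul, eta_fin_two (γ.map toQ), mul_fin_two, mul_fin_two]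
  ext <;> simp only [map_apply, Matrix.smul_apply, of_apply, cons_val', cons_val_one,
    cons_val_fin_one, re_smul, imI_smul, imJ_smul, imK_smul, re_add, imI_add, imJ_add, imK_add,
    one_mul, mul_one, re_neg, imI_neg, imJ_neg, imK_neg, re_mul, imI_mul, imJ_mul, imK_mul,
    smul_eq_mul] <;>
    simp only [toQ, jq] <;> ring

theorem normSq_Ψ_one_one : normSq (Ψ γ 1 1) = normSq (Ψ γ 0 0) := by
  rw [Ψ_one_one, Ψ_zero_zero, normSq_mk, normSq_mk]
  ring

theorem Ψ_one_one_mul_starred : Ψ γ 1 1 * starred (Ψ γ 0 0) = ((normSq (Ψ γ 0 0) : ℝ) : ℍ[ℝ]) := by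
  ext <;> simp only [re_mul, imI_mul, imJ_mul, imK_mul, re_coe, imI_coe, imJ_coe, imK_coe] <;>
    simp only [starred, Ψ_one_one, Ψ_zero_zero, normSq_mk] <;> ring

variable {γ}

theorem re_det_fin_two_eq_one (hdet : γ.det = 1) :
    (γ 0 0).re * (γ 1 1).re - (γ 0 0).im * (γ 1 1).im - (γ 0 1).re * (γ 1 0).re
      + (γ 0 1).im * (γ 1 0).im = 1 := by
  have := congrArg Complex.re hdet
  rw [Matrix.det_fin_two, Complex.sub_re, Complex.mul_re, Complex.mul_re, Complex.one_re] at this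
  linarith

theorem normSq_Ψ_zero_zero (hdet : γ.det = 1) : normSq (Ψ γ 0 0) = normSq (Ψ γ 1 0) + 1 := by
  rw [Ψ_zero_zero, Ψ_one_zero, normSq_mk, normSq_mk]
  linear_combination re_det_fin_two_eq_one hdet

theorem normSq_Ψ_one_zero (hdet : γ.det = 1) : normSq (Ψ γ 1 0) = (mnorm γ - 2) / 4 := by
  rw [Ψ_one_zero, normSq_mk, mnorm]
  simp only [Complex.normSq_apply]
  linear_combination (-1 / 2 : ℝ) * re_det_fin_two_eq_one hdet

end

/-- For `γ ∈ SL₂(ℂ)\SU₂(ℂ)` with `Ψ(γ) = [[A,C′],[C,A′]]`, the center `P = −C⁻¹A′` and the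
point `Ψ(γ⁻¹)(0) = −C̄·(A*)⁻¹` are inverse points with respect to `S²`: they lie on the same
ray from the origin (their ratio is the positive real number `|A|²|C|⁻²`) and the product of
their Euclidean norms equals `1`. -/
theorem stmt9 (γ : Matrix (Fin 2) (Fin 2) ℂ) (hdet : γ.det = 1) (hsu : mnorm γ ≠ 2) :
    (-(Ψ γ 1 0)⁻¹ * Ψ γ 1 1) * (-(star (Ψ γ 1 0)) * (starred (Ψ γ 0 0))⁻¹)⁻¹ =
      ((Quaternion.normSq (Ψ γ 0 0) * (Quaternion.normSq (Ψ γ 1 0))⁻¹ : ℝ) : ℍ[ℝ]) ∧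
    ‖-(Ψ γ 1 0)⁻¹ * Ψ γ 1 1‖ * ‖-(star (Ψ γ 1 0)) * (starred (Ψ γ 0 0))⁻¹‖ = 1 ∧
    -(star (Ψ γ 1 0)) * (starred (Ψ γ 0 0))⁻¹ =
      (Quaternion.normSq (-(Ψ γ 1 0)⁻¹ * Ψ γ 1 1))⁻¹ • (-(Ψ γ 1 0)⁻¹ * Ψ γ 1 1) := by
  have hC : normSq (Ψ γ 1 0) ≠ 0 := by
    rw [normSq_Ψ_one_zero hdet]
    exact div_ne_zero (sub_ne_zero.mpr hsu) four_ne_zero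
  have hA : normSq (Ψ γ 0 0) ≠ 0 := by
    rw [normSq_Ψ_zero_zero hdet]
    exact (add_pos_of_nonneg_of_pos (normSq_nonneg) one_pos).ne'
  have hratio := neg_inv_mul_mul_inv_eq_of_mul_eq_coe (Ψ γ 1 0) _ _ (Ψ_one_one_mul_starred γ)
  have hP : -(Ψ γ 1 0)⁻¹ * Ψ γ 1 1 ≠ 0 := by
    intro hP0
    rw [hP0, zero_mul, ← coe_zero, coe_inj] at hratio
    exact mul_ne_zero hA (inv_ne_zero hC) hratio.symm
  have hnormP : normSq (-(Ψ γ 1 0)⁻¹ * Ψ γ 1 1) = normSq (Ψ γ 0 0) * (normSq (Ψ γ 1 0))⁻¹ := by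
    rw [neg_mul, normSq_neg, map_mul, map_inv₀, normSq_Ψ_one_one, mul_comm]
  have hinv := eq_inv_normSq_smul_of_mul_inv_eq hP (hratio.trans (by rw [hnormP]))
  exact ⟨hratio, hinv ▸ norm_mul_norm_inv_normSq_smul hP, hinv⟩
end

section
/- Let γ = [[a,b],[c,d]] ∈ SL₂(ℂ)\SU₂(ℂ) with isometric sphere Σ_{Ψ(γ)} in the ball model. Then: (1) 0 ∉ Σ_{Ψ(γ)}; (2) j ∈ Σ_{Ψ(γ)} iff |a|²+|c|² = 1; (3) j lies in the interior of Σ_{Ψ(γ)} iff |a|²+|c|² < 1; (4) −j ∈ Σ_{Ψ(γ)} iff |b|²+|d|² = 1; (5) −j lies in the interior iff |b|²+|d|² < 1. -/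
open scoped Quaternion
open Matrix

/-!
Write `C = Ψ(γ)₁₀` and `A′ = Ψ(γ)₁₁`. Since the quaternion norm is multiplicative,
`|x + C⁻¹A′|² = |Cx + A′|² / |C|²`, so `x` lies on (inside) the isometric sphere exactly when
`|Cx + A′| = 1` (`< 1`). In coordinates `Cj + A′ = ā + cj` and `C(−j) + A′ = d − b̄j`, while
`|C|² = (‖γ‖² − 2)/4` and `|A′|² = (‖γ‖² + 2)/4` when `det γ = 1`. Hence `γ ∉ SU₂(ℂ)`,
i.e. `‖γ‖² ≠ 2`, gives both `C ≠ 0` and `|A′| ≠ 1`, which puts `0` off the sphere.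
-/

namespace Quaternion

variable {R : Type*} [Field R] [LinearOrder R] [IsStrictOrderedRing R] {C : ℍ[R]}

theorem normSq_sub_neg_inv_mul (hC : C ≠ 0) (A x : ℍ[R]) :
    normSq (x - -C⁻¹ * A) = (normSq C)⁻¹ * normSq (C * x + A) := by
  conv_lhs => rw [neg_mul, sub_neg_eq_add, ← inv_mul_cancel_left₀ hC x, ← mul_add]
  rw [map_mul, map_inv₀]

theorem normSq_sub_neg_inv_mul_eq_inv_iff (hC : C ≠ 0) (A x : ℍ[R]) :
    normSq (x - -C⁻¹ * A) = (normSq C)⁻¹ ↔ normSq (C * x + A) = 1 := by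
  have hC' := normSq_ne_zero.2 hC
  rw [normSq_sub_neg_inv_mul hC, inv_mul_eq_iff_eq_mul₀ hC', mul_inv_cancel₀ hC']

theorem normSq_sub_neg_inv_mul_lt_inv_iff (hC : C ≠ 0) (A x : ℍ[R]) :
    normSq (x - -C⁻¹ * A) < (normSq C)⁻¹ ↔ normSq (C * x + A) < 1 := by
  have hpos : 0 < (normSq C)⁻¹ := inv_pos.2 (normSq_nonneg.lt_of_ne' (normSq_ne_zero.2 hC))
  rw [normSq_sub_neg_inv_mul hC, mul_lt_iff_lt_one_right hpos]

end Quaternion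

@[simp] theorem toQ_re (z : ℂ) : (toQ z).re = z.re := rfl
@[simp] theorem toQ_imI (z : ℂ) : (toQ z).imI = z.im := rfl
@[simp] theorem toQ_imJ (z : ℂ) : (toQ z).imJ = 0 := rfl
@[simp] theorem toQ_imK (z : ℂ) : (toQ z).imK = 0 := rfl
@[simp] theorem jq_re : jq.re = 0 := rfl
@[simp] theorem jq_imI : jq.imI = 0 := rfl
@[simp] theorem jq_imJ : jq.imJ = 1 := rfl
@[simp] theorem jq_imK : jq.imK = 0 := rfl

theorem mnorm_fin_two_of (a b c d : ℂ) :
    mnorm !![a, b; c, d] =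
      Complex.normSq a + Complex.normSq b + Complex.normSq c + Complex.normSq d :=
  rfl

theorem Ψ_apply_one_zero (a b c d : ℂ) :
    Ψ !![a, b; c, d] 1 0 =
      (⟨(c.re + b.re) / 2, (c.im - b.im) / 2, (d.re - a.re) / 2, (d.im + a.im) / 2⟩ : ℍ[ℝ]) := by
  simp only [Ψ, Matrix.smul_mul, Matrix.mul_smul, smul_smul,
    TsirelsonInequality.sqrt_two_inv_mul_self]
  ext <;> simp [Matrix.mul_apply, Fin.sum_univ_two, Matrix.vecMul, dotProduct,
    Quaternion.re_mul, Quaternion.imI_mul, Quaternion.imJ_mul, Quaternion.imK_mul] <;> ring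

theorem Ψ_apply_one_one (a b c d : ℂ) :
    Ψ !![a, b; c, d] 1 1 =
      (⟨(a.re + d.re) / 2, (d.im - a.im) / 2, (c.re - b.re) / 2, (c.im + b.im) / 2⟩ : ℍ[ℝ]) := by
  simp only [Ψ, Matrix.smul_mul, Matrix.mul_smul, smul_smul,
    TsirelsonInequality.sqrt_two_inv_mul_self]
  ext <;> simp [Matrix.mul_apply, Fin.sum_univ_two, Matrix.vecMul, dotProduct,
    Quaternion.re_mul, Quaternion.imI_mul, Quaternion.imJ_mul, Quaternion.imK_mul] <;> ring

theorem normSq_Ψ_apply_one_zero (a b c d : ℂ) :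
    Quaternion.normSq (Ψ !![a, b; c, d] 1 0) =
      (mnorm !![a, b; c, d] - 2 * (a * d - b * c).re) / 4 := by
  rw [Quaternion.normSq_def', Ψ_apply_one_zero, mnorm_fin_two_of]
  simp only [Complex.normSq_apply, Complex.sub_re, Complex.mul_re]
  ring

theorem normSq_Ψ_apply_one_one (a b c d : ℂ) :
    Quaternion.normSq (Ψ !![a, b; c, d] 1 1) =
      (mnorm !![a, b; c, d] + 2 * (a * d - b * c).re) / 4 := by
  rw [Quaternion.normSq_def', Ψ_apply_one_one, mnorm_fin_two_of]
  simp only [Complex.normSq_apply, Complex.sub_re, Complex.mul_re]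
  ring

theorem normSq_Ψ_apply_mul_jq_add (a b c d : ℂ) :
    Quaternion.normSq (Ψ !![a, b; c, d] 1 0 * jq + Ψ !![a, b; c, d] 1 1) =
      Complex.normSq a + Complex.normSq c := by
  simp only [Quaternion.normSq_def', Quaternion.re_add, Quaternion.imI_add, Quaternion.imJ_add,
    Quaternion.imK_add, Quaternion.re_mul, Quaternion.imI_mul, Quaternion.imJ_mul,
    Quaternion.imK_mul]
  simp [Ψ_apply_one_zero, Ψ_apply_one_one, Complex.normSq_apply]
  ring

theorem normSq_Ψ_apply_mul_neg_jq_add (a b c d : ℂ) :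
    Quaternion.normSq (Ψ !![a, b; c, d] 1 0 * -jq + Ψ !![a, b; c, d] 1 1) =
      Complex.normSq b + Complex.normSq d := by
  simp only [Quaternion.normSq_def', Quaternion.re_add, Quaternion.imI_add, Quaternion.imJ_add,
    Quaternion.imK_add, Quaternion.re_mul, Quaternion.imI_mul, Quaternion.imJ_mul,
    Quaternion.imK_mul]
  simp [Ψ_apply_one_zero, Ψ_apply_one_one, Complex.normSq_apply]
  ring

/-- For `γ = [[a,b],[c,d]] ∈ SL₂(ℂ)\SU₂(ℂ)` with isometric sphere `Σ_{Ψ(γ)}` (center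
`P = −C⁻¹A′`, radius `R = 1/|C|`) in the ball model:
(1) `0 ∉ Σ_{Ψ(γ)}`; (2) `j ∈ Σ_{Ψ(γ)}` iff `|a|²+|c|² = 1`; (3) `j` is interior to `Σ_{Ψ(γ)}`
iff `|a|²+|c|² < 1`; (4) `−j ∈ Σ_{Ψ(γ)}` iff `|b|²+|d|² = 1`; (5) `−j` is interior iff
`|b|²+|d|² < 1`. -/
theorem stmt13 (a b c d : ℂ) (hdet : a * d - b * c = 1)
    (hsu : mnorm !![a, b; c, d] ≠ 2) :
    Quaternion.normSq ((0 : ℍ[ℝ]) - -(Ψ !![a, b; c, d] 1 0)⁻¹ * Ψ !![a, b; c, d] 1 1) ≠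
      (Quaternion.normSq (Ψ !![a, b; c, d] 1 0))⁻¹ ∧
    (Quaternion.normSq (jq - -(Ψ !![a, b; c, d] 1 0)⁻¹ * Ψ !![a, b; c, d] 1 1) =
        (Quaternion.normSq (Ψ !![a, b; c, d] 1 0))⁻¹ ↔
      Complex.normSq a + Complex.normSq c = 1) ∧
    (Quaternion.normSq (jq - -(Ψ !![a, b; c, d] 1 0)⁻¹ * Ψ !![a, b; c, d] 1 1) <
        (Quaternion.normSq (Ψ !![a, b; c, d] 1 0))⁻¹ ↔
      Complex.normSq a + Complex.normSq c < 1) ∧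
    (Quaternion.normSq (-jq - -(Ψ !![a, b; c, d] 1 0)⁻¹ * Ψ !![a, b; c, d] 1 1) =
        (Quaternion.normSq (Ψ !![a, b; c, d] 1 0))⁻¹ ↔
      Complex.normSq b + Complex.normSq d = 1) ∧
    (Quaternion.normSq (-jq - -(Ψ !![a, b; c, d] 1 0)⁻¹ * Ψ !![a, b; c, d] 1 1) <
        (Quaternion.normSq (Ψ !![a, b; c, d] 1 0))⁻¹ ↔
      Complex.normSq b + Complex.normSq d < 1) := by
  have hC : Ψ !![a, b; c, d] 1 0 ≠ 0 := by
    rw [← Quaternion.normSq_ne_zero, normSq_Ψ_apply_one_zero, hdet, Complex.one_re]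
    contrapose! hsu
    linarith
  refine ⟨?_, ?_, ?_, ?_, ?_⟩
  · rw [Ne, Quaternion.normSq_sub_neg_inv_mul_eq_inv_iff hC, mul_zero, zero_add,
      normSq_Ψ_apply_one_one, hdet, Complex.one_re]
    contrapose! hsu
    linarith
  · rw [Quaternion.normSq_sub_neg_inv_mul_eq_inv_iff hC, normSq_Ψ_apply_mul_jq_add]
  · rw [Quaternion.normSq_sub_neg_inv_mul_lt_inv_iff hC, normSq_Ψ_apply_mul_jq_add]
  · rw [Quaternion.normSq_sub_neg_inv_mul_eq_inv_iff hC, normSq_Ψ_apply_mul_neg_jq_add]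
  · rw [Quaternion.normSq_sub_neg_inv_mul_lt_inv_iff hC, normSq_Ψ_apply_mul_neg_jq_add]
end
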